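/- arXiv:1504.02534 — 2 statements merged into one kernel-verified Lean document; each statement's English description precedes it below -/
import Mathlib

section
/- For the metric ds² = e^{x¹+x³}(dx¹)² + 2 dx¹dx² + (dx³)² + e^{x¹}(dx⁴)², the 1-form η = dx¹ is parallel, i.e., ∇η = 0 where ∇ is the Levi-Civita connection. -/
open Real

noncomputable section

/-- A point of `ℝ⁴` (coordinates are 0-indexed: `x¹ = p 0`, ..., `x⁴ = p 3`). -/
abbrev Pt : Type := Fin 4 → ℝ

/-- Components of the metric
`ds² = e^{x¹+x³}(dx¹)² + 2 dx¹dx² + (dx³)² + e^{x¹}(dx⁴)²`. -/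
def gm (i j : Fin 4) (p : Pt) : ℝ :=
  if i = 0 ∧ j = 0 then exp (p 0 + p 2)
  else if (i = 0 ∧ j = 1) ∨ (i = 1 ∧ j = 0) then 1
  else if i = 2 ∧ j = 2 then 1
  else if i = 3 ∧ j = 3 then exp (p 0)
  else 0

/-- Components of the inverse metric. -/
def ginv (i j : Fin 4) (p : Pt) : ℝ :=
  if (i = 0 ∧ j = 1) ∨ (i = 1 ∧ j = 0) then 1
  else if i = 1 ∧ j = 1 then -exp (p 0 + p 2)
  else if i = 2 ∧ j = 2 then 1
  else if i = 3 ∧ j = 3 then exp (-(p 0))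
  else 0

/-- Partial derivative in the `i`-th coordinate direction. -/
def pd (i : Fin 4) (f : Pt → ℝ) (p : Pt) : ℝ := fderiv ℝ f p (Pi.single i 1)

/-- Christoffel symbols of the second kind,
`Γᵏᵢⱼ = (1/2) gᵏˡ (∂ᵢ g_{jl} + ∂ⱼ g_{il} − ∂_l g_{ij})`. -/
def Chr (k i j : Fin 4) (p : Pt) : ℝ :=
  (1/2) * ∑ l, ginv k l p * (pd i (gm j l) p + pd j (gm i l) p - pd l (gm i j) p)

/-- The (0,4) Riemann curvature tensor,
`R_{hijk} = g_{hl}(∂ᵢΓˡⱼₖ − ∂ⱼΓˡᵢₖ + ΓˡᵢₘΓᵐⱼₖ − ΓˡⱼₘΓᵐᵢₖ)`. -/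
def Riem (h i j k : Fin 4) (p : Pt) : ℝ :=
  ∑ l, gm h l p * (pd i (Chr l j k) p - pd j (Chr l i k) p
    + ∑ m, (Chr l i m p * Chr m j k p - Chr l j m p * Chr m i k p))

/-- The Ricci tensor `S_{ij} = gʰᵏ R_{hijk}`. -/
def Ric (i j : Fin 4) (p : Pt) : ℝ := ∑ h, ∑ k, ginv h k p * Riem h i j k p

/-- The scalar curvature `r = gⁱʲ S_{ij}`. -/
def scal (p : Pt) : ℝ := ∑ i, ∑ j, ginv i j p * Ric i j p

/-- Covariant derivative of a 1-form: `∇_l η_j = ∂_l η_j − Γᵏ_{lj} η_k`. -/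
def cov1 (T : Fin 4 → Pt → ℝ) (l j : Fin 4) (p : Pt) : ℝ :=
  pd l (T j) p - ∑ m, Chr m l j p * T m p

/-- Covariant derivative of a (0,2)-tensor field: `T_{ij,l}`. -/
def cov2 (T : Fin 4 → Fin 4 → Pt → ℝ) (l i j : Fin 4) (p : Pt) : ℝ :=
  pd l (T i j) p - ∑ m, Chr m l i p * T m j p - ∑ m, Chr m l j p * T i m p

/-- Covariant derivative of a (0,4)-tensor field: `T_{hijk,l}`. -/
def cov4 (T : Fin 4 → Fin 4 → Fin 4 → Fin 4 → Pt → ℝ) (l h i j k : Fin 4) (p : Pt) : ℝ :=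
  pd l (T h i j k) p - ∑ m, Chr m l h p * T m i j k p - ∑ m, Chr m l i p * T h m j k p
    - ∑ m, Chr m l j p * T h i m k p - ∑ m, Chr m l k p * T h i j m p

/-- Kulkarni–Nomizu product of two (0,2)-tensor fields. -/
def kn (J F : Fin 4 → Fin 4 → Pt → ℝ) (a b c d : Fin 4) (p : Pt) : ℝ :=
  J a d p * F b c p + J b c p * F a d p - J a c p * F b d p - J b d p * F a c p

/-- The Weyl conformal curvature tensor (for `n = 4`):
`C = R − (1/2)(g∧S) + (r/12)(g∧g)`. -/
def Weyl (a b c d : Fin 4) (p : Pt) : ℝ :=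
  Riem a b c d p - (1/2) * kn gm Ric a b c d p + (scal p / 12) * kn gm gm a b c d p

/-- The conharmonic curvature tensor (for `n = 4`): `K = R − (1/2)(g∧S)`. -/
def Conh (a b c d : Fin 4) (p : Pt) : ℝ :=
  Riem a b c d p - (1/2) * kn gm Ric a b c d p

/-- The projective curvature tensor (for `n = 4`):
`P(X₁,X₂,X₃,X₄) = R(X₁,X₂,X₃,X₄) − (1/3)[g(X₁,X₄)S(X₂,X₃) − g(X₂,X₄)S(X₁,X₃)]`. -/
def Proj (a b c d : Fin 4) (p : Pt) : ℝ :=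
  Riem a b c d p - (1/3) * (gm a d p * Ric b c p - gm b d p * Ric a c p)

/-- The (1,3)-form of a (0,4)-tensor: `(𝓣(e_e,e_f) e_a)ⁿ = gⁿᵐ T_{efam}`. -/
def up (T : Fin 4 → Fin 4 → Fin 4 → Fin 4 → Pt → ℝ) (e f a n : Fin 4) (p : Pt) : ℝ :=
  ∑ m, ginv n m p * T e f a m p

/-- The action `(H·T)(X₁,X₂,X₃,X₄;X,Y) = −Σᵢ T(…,𝓗(X,Y)Xᵢ,…)` of a (0,4)-tensor `H`
on a (0,4)-tensor `T`. -/
def dotT (H T : Fin 4 → Fin 4 → Fin 4 → Fin 4 → Pt → ℝ)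
    (a b c d e f : Fin 4) (p : Pt) : ℝ :=
  -(∑ n, up H e f a n p * T n b c d p) - (∑ n, up H e f b n p * T a n c d p)
    - (∑ n, up H e f c n p * T a b n d p) - (∑ n, up H e f d n p * T a b c n p)

/-- The Tachibana tensor `Q(E,T)(X₁,X₂,X₃,X₄;X,Y) = −Σᵢ T(…,(X∧_E Y)Xᵢ,…)`,
where `(X∧_E Y)Z = E(Y,Z)X − E(X,Z)Y`. -/
def Tach (E : Fin 4 → Fin 4 → Pt → ℝ) (T : Fin 4 → Fin 4 → Fin 4 → Fin 4 → Pt → ℝ)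
    (a b c d e f : Fin 4) (p : Pt) : ℝ :=
  -(E f a p * T e b c d p - E e a p * T f b c d p)
    - (E f b p * T a e c d p - E e b p * T a f c d p)
    - (E f c p * T a b e d p - E e c p * T a b f d p)
    - (E f d p * T a b c e p - E e d p * T a b c f p)

lemma pd_const (i : Fin 4) (c : ℝ) (p : Pt) : pd i (fun _ => c) p = 0 := by
  simp [pd]

lemma hasfd_coord (i : Fin 4) (p : Pt) :
    HasFDerivAt (fun q : Pt => q i) (ContinuousLinearMap.proj i : Pt →L[ℝ] ℝ) p :=
  (ContinuousLinearMap.proj i : Pt →L[ℝ] ℝ).hasFDerivAt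

lemma pd1_exp02 (p : Pt) : pd 1 (fun q : Pt => Real.exp (q 0 + q 2)) p = 0 := by
  have h : HasFDerivAt (fun q : Pt => Real.exp (q 0 + q 2))
      (Real.exp (p 0 + p 2) •
        ((ContinuousLinearMap.proj 0 : Pt →L[ℝ] ℝ) + ContinuousLinearMap.proj 2)) p :=
    ((hasfd_coord 0 p).add (hasfd_coord 2 p)).exp
  rw [pd, h.fderiv]
  simp [Pi.single_eq_of_ne]

lemma pd1_exp0 (p : Pt) : pd 1 (fun q : Pt => Real.exp (q 0)) p = 0 := by
  have h : HasFDerivAt (fun q : Pt => Real.exp (q 0))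
      (Real.exp (p 0) • (ContinuousLinearMap.proj 0 : Pt →L[ℝ] ℝ)) p :=
    (hasfd_coord 0 p).exp
  rw [pd, h.fderiv]
  simp [Pi.single_eq_of_ne]

lemma gm_eq00 : gm 0 0 = fun q : Pt => Real.exp (q 0 + q 2) := by
  funext q; simp [gm]

lemma gm_eq01 : gm 0 1 = fun _ : Pt => (1:ℝ) := by
  funext q; simp [gm]

lemma gm_eq02 : gm 0 2 = fun _ : Pt => (0:ℝ) := by
  funext q; simp [gm]

lemma gm_eq03 : gm 0 3 = fun _ : Pt => (0:ℝ) := by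
  funext q; simp [gm]

lemma gm_eq10 : gm 1 0 = fun _ : Pt => (1:ℝ) := by
  funext q; simp [gm]

lemma gm_eq11 : gm 1 1 = fun _ : Pt => (0:ℝ) := by
  funext q; simp [gm]

lemma gm_eq12 : gm 1 2 = fun _ : Pt => (0:ℝ) := by
  funext q; simp [gm]

lemma gm_eq13 : gm 1 3 = fun _ : Pt => (0:ℝ) := by
  funext q; simp [gm]

lemma gm_eq20 : gm 2 0 = fun _ : Pt => (0:ℝ) := by
  funext q; simp [gm]

lemma gm_eq21 : gm 2 1 = fun _ : Pt => (0:ℝ) := by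
  funext q; simp [gm]

lemma gm_eq22 : gm 2 2 = fun _ : Pt => (1:ℝ) := by
  funext q; simp [gm]

lemma gm_eq23 : gm 2 3 = fun _ : Pt => (0:ℝ) := by
  funext q; simp [gm]

lemma gm_eq30 : gm 3 0 = fun _ : Pt => (0:ℝ) := by
  funext q; simp [gm]

lemma gm_eq31 : gm 3 1 = fun _ : Pt => (0:ℝ) := by
  funext q; simp [gm]

lemma gm_eq32 : gm 3 2 = fun _ : Pt => (0:ℝ) := by
  funext q; simp [gm]

lemma gm_eq33 : gm 3 3 = fun q : Pt => Real.exp (q 0) := by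
  funext q; simp [gm]

lemma pd1_gm (i j : Fin 4) (p : Pt) : pd 1 (gm i j) p = 0 := by
  fin_cases i <;> fin_cases j <;>
    simp [gm_eq00, gm_eq01, gm_eq02, gm_eq03, gm_eq10, gm_eq11, gm_eq12, gm_eq13, gm_eq20, gm_eq21, gm_eq22, gm_eq23, gm_eq30, gm_eq31, gm_eq32, gm_eq33, pd1_exp02, pd1_exp0, pd_const]

lemma pd_gm_col1 (i j : Fin 4) (p : Pt) : pd i (gm j 1) p = 0 := by
  fin_cases j <;> simp [gm_eq01, gm_eq11, gm_eq21, gm_eq31, pd_const]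

lemma chr0 (i j : Fin 4) (p : Pt) : Chr 0 i j p = 0 := by
  rw [Chr, Fin.sum_univ_four]
  simp [ginv, pd1_gm, pd_gm_col1]

/-- the 1-form `η = dx¹` is parallel: `∇ᵢηⱼ = ∂ᵢηⱼ − Γᵏᵢⱼηₖ = 0`. -/
theorem eta_parallel :
    ∀ (p : Pt) (i j : Fin 4),
      cov1 (fun k _ => if k = 0 then (1:ℝ) else 0) i j p = 0 := by
  intro p i j
  rw [cov1, Fin.sum_univ_four]
  simp [chr0, pd_const]
end
end

section
/- The metric ds² = e^{x¹+x³}(dx¹)² + 2 dx¹dx² + (dx³)² + e^{x¹}(dx⁴)² is not recurrent: there is no 1-form A such that R_{hijk,l} = A_l R_{hijk} for all indices. -/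
open Real

noncomputable section

lemma hasF_e02 (c : ℝ) (p : Pt) : HasFDerivAt (fun q : Pt => c * Real.exp (q 0 + q 2))
    ((c * Real.exp (p 0 + p 2)) • ((ContinuousLinearMap.proj 0 : Pt →L[ℝ] ℝ) + ContinuousLinearMap.proj 2)) p := by
  have h0 : HasFDerivAt (fun q : Pt => q 0) (ContinuousLinearMap.proj 0 : Pt →L[ℝ] ℝ) p :=
    hasFDerivAt_apply 0 p
  have h2 : HasFDerivAt (fun q : Pt => q 2) (ContinuousLinearMap.proj 2 : Pt →L[ℝ] ℝ) p :=
    hasFDerivAt_apply 2 p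
  have := ((h0.add h2).exp).const_mul c
  refine this.congr_fderiv ?_
  ext v
  simp [smul_smul]

lemma pd_e02 (c : ℝ) (i : Fin 4) (p : Pt) :
    pd i (fun q => c * Real.exp (q 0 + q 2)) p
      = (if i = 0 ∨ i = 2 then 1 else 0) * (c * Real.exp (p 0 + p 2)) := by
  have h := (hasF_e02 c p).fderiv
  rw [pd, h]
  fin_cases i <;> simp [Pi.single_apply]

lemma hasF_e0 (c : ℝ) (p : Pt) : HasFDerivAt (fun q : Pt => c * Real.exp (q 0))
    ((c * Real.exp (p 0)) • (ContinuousLinearMap.proj 0 : Pt →L[ℝ] ℝ)) p := by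
  have h0 : HasFDerivAt (fun q : Pt => q 0) (ContinuousLinearMap.proj 0 : Pt →L[ℝ] ℝ) p :=
    hasFDerivAt_apply 0 p
  have := (h0.exp).const_mul c
  refine this.congr_fderiv ?_
  ext v
  simp [smul_smul]

lemma pd_e0 (c : ℝ) (i : Fin 4) (p : Pt) :
    pd i (fun q => c * Real.exp (q 0)) p
      = (if i = 0 then 1 else 0) * (c * Real.exp (p 0)) := by
  have h := (hasF_e0 c p).fderiv
  rw [pd, h]
  fin_cases i <;> simp [Pi.single_apply]

lemma pd_e02' (i : Fin 4) (p : Pt) :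
    pd i (fun q => Real.exp (q 0 + q 2)) p
      = (if i = 0 ∨ i = 2 then 1 else 0) * Real.exp (p 0 + p 2) := by
  have := pd_e02 1 i p
  simpa using this

lemma pd_e0' (i : Fin 4) (p : Pt) :
    pd i (fun q => Real.exp (q 0)) p = (if i = 0 then 1 else 0) * Real.exp (p 0) := by
  have := pd_e0 1 i p
  simpa using this

lemma pd_e02'' (i : Fin 4) (p : Pt) :
    pd i (fun q => Real.exp (q 0) * Real.exp (q 2)) p
      = (if i = 0 ∨ i = 2 then 1 else 0) * (Real.exp (p 0) * Real.exp (p 2)) := by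
  have hf : (fun q : Pt => Real.exp (q 0) * Real.exp (q 2)) = fun q => Real.exp (q 0 + q 2) := by
    funext q; rw [Real.exp_add]
  rw [hf, pd_e02', Real.exp_add]

lemma gm00 : gm 0 0 = fun p => (1:ℝ) * Real.exp (p 0 + p 2) := by
  funext p; simp [gm]

lemma gm33 : gm 3 3 = fun p => (1:ℝ) * Real.exp (p 0) := by
  funext p; simp [gm]

lemma gm01 : gm 0 1 = fun _ => (1:ℝ) := by funext p; simp [gm]

lemma gm10 : gm 1 0 = fun _ => (1:ℝ) := by funext p; simp [gm]

lemma gm22 : gm 2 2 = fun _ => (1:ℝ) := by funext p; simp [gm]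

lemma gm02 : gm 0 2 = fun _ => (0:ℝ) := by funext p; simp [gm]

lemma gm03 : gm 0 3 = fun _ => (0:ℝ) := by funext p; simp [gm]

lemma gm11 : gm 1 1 = fun _ => (0:ℝ) := by funext p; simp [gm]

lemma gm12 : gm 1 2 = fun _ => (0:ℝ) := by funext p; simp [gm]

lemma gm13 : gm 1 3 = fun _ => (0:ℝ) := by funext p; simp [gm]

lemma gm20 : gm 2 0 = fun _ => (0:ℝ) := by funext p; simp [gm]

lemma gm21 : gm 2 1 = fun _ => (0:ℝ) := by funext p; simp [gm]

lemma gm23 : gm 2 3 = fun _ => (0:ℝ) := by funext p; simp [gm]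

lemma gm30 : gm 3 0 = fun _ => (0:ℝ) := by funext p; simp [gm]

lemma gm31 : gm 3 1 = fun _ => (0:ℝ) := by funext p; simp [gm]

lemma gm32 : gm 3 2 = fun _ => (0:ℝ) := by funext p; simp [gm]

def chrF (k i j : Fin 4) : Pt → ℝ :=
  if k = 1 ∧ ((i = 0 ∧ j = 0) ∨ (i = 0 ∧ j = 2) ∨ (i = 2 ∧ j = 0)) then
    fun p => (1/2 : ℝ) * Real.exp (p 0 + p 2)
  else if k = 1 ∧ i = 3 ∧ j = 3 then fun p => (-(1/2) : ℝ) * Real.exp (p 0)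
  else if k = 2 ∧ i = 0 ∧ j = 0 then fun p => (-(1/2) : ℝ) * Real.exp (p 0 + p 2)
  else if k = 3 ∧ ((i = 0 ∧ j = 3) ∨ (i = 3 ∧ j = 0)) then fun _ => (1/2 : ℝ)
  else fun _ => (0:ℝ)

set_option maxHeartbeats 2000000 in

lemma chr_eq (k i j : Fin 4) : Chr k i j = chrF k i j := by
  funext p
  fin_cases k <;> fin_cases i <;> fin_cases j <;>
    simp [Chr, chrF, ginv, Fin.sum_univ_four, gm00, gm33, gm01, gm10, gm22, gm02, gm03,
      gm11, gm12, gm13, gm20, gm21, gm23, gm30, gm31, gm32,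
      pd_const, pd_e02, pd_e0, pd_e02', pd_e0', pd_e02''] <;> norm_num <;> ring_nf <;> norm_num [Real.exp_add, ← Real.exp_add] <;> ring

lemma pd_ce02 (c : ℝ) (i : Fin 4) (p : Pt) :
    pd i (fun q => c * (Real.exp (q 0) * Real.exp (q 2))) p
      = (if i = 0 ∨ i = 2 then 1 else 0) * (c * (Real.exp (p 0) * Real.exp (p 2))) := by
  have hf : (fun q : Pt => c * (Real.exp (q 0) * Real.exp (q 2)))
      = fun q => c * Real.exp (q 0 + q 2) := by
    funext q; rw [Real.exp_add]
  rw [hf, pd_e02, Real.exp_add]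

lemma pd_e0c (c : ℝ) (i : Fin 4) (p : Pt) :
    pd i (fun q => Real.exp (q 0) * c) p
      = (if i = 0 then 1 else 0) * (c * Real.exp (p 0)) := by
  have hf : (fun q : Pt => Real.exp (q 0) * c) = fun q => c * Real.exp (q 0) := by
    funext q; ring
  rw [hf, pd_e0]

lemma pd_nege0 (c : ℝ) (i : Fin 4) (p : Pt) :
    pd i (fun q => -(c * Real.exp (q 0))) p
      = (if i = 0 then 1 else 0) * (-c * Real.exp (p 0)) := by
  have hf : (fun q : Pt => -(c * Real.exp (q 0))) = fun q => (-c) * Real.exp (q 0) := by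
    funext q; ring
  rw [hf, pd_e0]

lemma pd_e02c (c : Real) (i : Fin 4) (p : Pt) :
    pd i (fun q => Real.exp (q 0) * Real.exp (q 2) * c) p
      = (if i = 0 ∨ i = 2 then 1 else 0) * (c * (Real.exp (p 0) * Real.exp (p 2))) := by
  have hf : (fun q : Pt => Real.exp (q 0) * Real.exp (q 2) * c)
      = fun q => c * (Real.exp (q 0) * Real.exp (q 2)) := by
    funext q; ring
  rw [hf, pd_ce02]

lemma pd_nege02 (c : Real) (i : Fin 4) (p : Pt) :
    pd i (fun q => -(c * (Real.exp (q 0) * Real.exp (q 2)))) p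
      = (if i = 0 ∨ i = 2 then 1 else 0) * (-c * (Real.exp (p 0) * Real.exp (p 2))) := by
  have hf : (fun q : Pt => -(c * (Real.exp (q 0) * Real.exp (q 2))))
      = fun q => (-c) * (Real.exp (q 0) * Real.exp (q 2)) := by
    funext q; ring
  rw [hf, pd_ce02]

set_option maxHeartbeats 1000000 in

lemma riem1202 : Riem 1 2 0 2 = fun _ => (0:ℝ) := by
  funext p
  simp [Riem, Fin.sum_univ_four, chr_eq, chrF, gm00, gm33, gm01, gm10, gm22, gm02, gm03, gm11, gm12, gm13, gm20, gm21, gm23, gm30, gm31, gm32, pd_const, pd_e02, pd_e0, pd_e02', pd_e0', pd_e02'', pd_ce02, pd_e0c, pd_nege0, pd_e02c, pd_nege02] <;> norm_num <;> ring_nf <;> norm_num [Real.exp_add, ← Real.exp_add] <;> ring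

set_option maxHeartbeats 1000000 in

lemma riem2202 : Riem 2 2 0 2 = fun _ => (0:ℝ) := by
  funext p
  simp [Riem, Fin.sum_univ_four, chr_eq, chrF, gm00, gm33, gm01, gm10, gm22, gm02, gm03, gm11, gm12, gm13, gm20, gm21, gm23, gm30, gm31, gm32, pd_const, pd_e02, pd_e0, pd_e02', pd_e0', pd_e02'', pd_ce02, pd_e0c, pd_nege0, pd_e02c, pd_nege02] <;> norm_num <;> ring_nf <;> norm_num [Real.exp_add, ← Real.exp_add] <;> ring

set_option maxHeartbeats 1000000 in

lemma riem0102 : Riem 0 1 0 2 = fun _ => (0:ℝ) := by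
  funext p
  simp [Riem, Fin.sum_univ_four, chr_eq, chrF, gm00, gm33, gm01, gm10, gm22, gm02, gm03, gm11, gm12, gm13, gm20, gm21, gm23, gm30, gm31, gm32, pd_const, pd_e02, pd_e0, pd_e02', pd_e0', pd_e02'', pd_ce02, pd_e0c, pd_nege0, pd_e02c, pd_nege02] <;> norm_num <;> ring_nf <;> norm_num [Real.exp_add, ← Real.exp_add] <;> ring

set_option maxHeartbeats 1000000 in

lemma riem0212 : Riem 0 2 1 2 = fun _ => (0:ℝ) := by
  funext p
  simp [Riem, Fin.sum_univ_four, chr_eq, chrF, gm00, gm33, gm01, gm10, gm22, gm02, gm03, gm11, gm12, gm13, gm20, gm21, gm23, gm30, gm31, gm32, pd_const, pd_e02, pd_e0, pd_e02', pd_e0', pd_e02'', pd_ce02, pd_e0c, pd_nege0, pd_e02c, pd_nege02] <;> norm_num <;> ring_nf <;> norm_num [Real.exp_add, ← Real.exp_add] <;> ring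

set_option maxHeartbeats 1000000 in

lemma riem0222 : Riem 0 2 2 2 = fun _ => (0:ℝ) := by
  funext p
  simp [Riem, Fin.sum_univ_four, chr_eq, chrF, gm00, gm33, gm01, gm10, gm22, gm02, gm03, gm11, gm12, gm13, gm20, gm21, gm23, gm30, gm31, gm32, pd_const, pd_e02, pd_e0, pd_e02', pd_e0', pd_e02'', pd_ce02, pd_e0c, pd_nege0, pd_e02c, pd_nege02] <;> norm_num <;> ring_nf <;> norm_num [Real.exp_add, ← Real.exp_add] <;> ring

set_option maxHeartbeats 1000000 in

lemma riem0201 : Riem 0 2 0 1 = fun _ => (0:ℝ) := by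
  funext p
  simp [Riem, Fin.sum_univ_four, chr_eq, chrF, gm00, gm33, gm01, gm10, gm22, gm02, gm03, gm11, gm12, gm13, gm20, gm21, gm23, gm30, gm31, gm32, pd_const, pd_e02, pd_e0, pd_e02', pd_e0', pd_e02'', pd_ce02, pd_e0c, pd_nege0, pd_e02c, pd_nege02] <;> norm_num <;> ring_nf <;> norm_num [Real.exp_add, ← Real.exp_add] <;> ring

set_option maxHeartbeats 1000000 in

lemma riem1303 : Riem 1 3 0 3 = fun _ => (0:ℝ) := by
  funext p
  simp [Riem, Fin.sum_univ_four, chr_eq, chrF, gm00, gm33, gm01, gm10, gm22, gm02, gm03, gm11, gm12, gm13, gm20, gm21, gm23, gm30, gm31, gm32, pd_const, pd_e02, pd_e0, pd_e02', pd_e0', pd_e02'', pd_ce02, pd_e0c, pd_nege0, pd_e02c, pd_nege02] <;> norm_num <;> ring_nf <;> norm_num [Real.exp_add, ← Real.exp_add] <;> ring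

set_option maxHeartbeats 1000000 in

lemma riem2303 : Riem 2 3 0 3 = fun _ => (0:ℝ) := by
  funext p
  simp [Riem, Fin.sum_univ_four, chr_eq, chrF, gm00, gm33, gm01, gm10, gm22, gm02, gm03, gm11, gm12, gm13, gm20, gm21, gm23, gm30, gm31, gm32, pd_const, pd_e02, pd_e0, pd_e02', pd_e0', pd_e02'', pd_ce02, pd_e0c, pd_nege0, pd_e02c, pd_nege02] <;> norm_num <;> ring_nf <;> norm_num [Real.exp_add, ← Real.exp_add] <;> ring

set_option maxHeartbeats 1000000 in

lemma riem0313 : Riem 0 3 1 3 = fun _ => (0:ℝ) := by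
  funext p
  simp [Riem, Fin.sum_univ_four, chr_eq, chrF, gm00, gm33, gm01, gm10, gm22, gm02, gm03, gm11, gm12, gm13, gm20, gm21, gm23, gm30, gm31, gm32, pd_const, pd_e02, pd_e0, pd_e02', pd_e0', pd_e02'', pd_ce02, pd_e0c, pd_nege0, pd_e02c, pd_nege02] <;> norm_num <;> ring_nf <;> norm_num [Real.exp_add, ← Real.exp_add] <;> ring

set_option maxHeartbeats 1000000 in

lemma riem0323 : Riem 0 3 2 3 = fun _ => (0:ℝ) := by
  funext p
  simp [Riem, Fin.sum_univ_four, chr_eq, chrF, gm00, gm33, gm01, gm10, gm22, gm02, gm03, gm11, gm12, gm13, gm20, gm21, gm23, gm30, gm31, gm32, pd_const, pd_e02, pd_e0, pd_e02', pd_e0', pd_e02'', pd_ce02, pd_e0c, pd_nege0, pd_e02c, pd_nege02] <;> norm_num <;> ring_nf <;> norm_num [Real.exp_add, ← Real.exp_add] <;> ring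

set_option maxHeartbeats 1000000 in

lemma riem0202 : Riem 0 2 0 2 = fun p => (1/2 : ℝ) * Real.exp (p 0 + p 2) := by
  funext p
  simp [Riem, Fin.sum_univ_four, chr_eq, chrF, gm00, gm33, gm01, gm10, gm22, gm02, gm03, gm11, gm12, gm13, gm20, gm21, gm23, gm30, gm31, gm32, pd_const, pd_e02, pd_e0, pd_e02', pd_e0', pd_e02'', pd_ce02, pd_e0c, pd_nege0, pd_e02c, pd_nege02] <;> norm_num <;> ring_nf <;> norm_num [Real.exp_add, ← Real.exp_add] <;> ring

set_option maxHeartbeats 1000000 in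

lemma riem0303 : Riem 0 3 0 3 = fun p => (1/4 : ℝ) * Real.exp (p 0) := by
  funext p
  simp [Riem, Fin.sum_univ_four, chr_eq, chrF, gm00, gm33, gm01, gm10, gm22, gm02, gm03, gm11, gm12, gm13, gm20, gm21, gm23, gm30, gm31, gm32, pd_const, pd_e02, pd_e0, pd_e02', pd_e0', pd_e02'', pd_ce02, pd_e0c, pd_nege0, pd_e02c, pd_nege02] <;> norm_num <;> ring_nf <;> norm_num [Real.exp_add, ← Real.exp_add] <;> ring

set_option maxHeartbeats 1000000 in
lemma cov4_0202 (p : Pt) : cov4 Riem 0 0 2 0 2 p = (1/2 : ℝ) * Real.exp (p 0 + p 2) := by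
  simp [cov4, Fin.sum_univ_four, chr_eq, chrF, riem0202, riem1202, riem2202, riem0102,
    riem0212, riem0222, riem0201, pd_const, pd_e02, pd_e0, pd_e02', pd_e0', pd_e02'',
    pd_ce02, pd_e0c, pd_nege0, pd_e02c, pd_nege02, Real.exp_add]
  try ring

set_option maxHeartbeats 1000000 in
lemma cov4_0303 (p : Pt) : cov4 Riem 0 0 3 0 3 p = 0 := by
  simp [cov4, Fin.sum_univ_four, chr_eq, chrF, riem0303, riem1303, riem2303, riem0313,
    riem0323, pd_const, pd_e02, pd_e0, pd_e02', pd_e0', pd_e02'', pd_ce02, pd_e0c,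
    pd_nege0, pd_e02c, pd_nege02]
  try ring


/-- the metric is not recurrent: there is no 1-form `A` with
`R_{hijk,l} = A_l R_{hijk}` for all indices. -/
theorem not_recurrent :
    ¬ ∃ A : Fin 4 → Pt → ℝ,
        ∀ (l h i j k : Fin 4) (p : Pt),
          cov4 Riem l h i j k p = A l p * Riem h i j k p := by
  rintro ⟨A, hA⟩
  have h1 := hA 0 0 2 0 2 (fun _ => 0)
  have h2 := hA 0 0 3 0 3 (fun _ => 0)
  rw [cov4_0202, riem0202] at h1
  rw [cov4_0303, riem0303] at h2
  norm_num at h1 h2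
  rw [h2] at h1
  norm_num at h1
end
end
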